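/- Let q ≥ 2, n ≥ 1, γ ≥ 0 with m = n(1+γ) an integer, and let y ∈ [q]^n. Then the probability that a uniformly random Z ∈ [q]^m contains y as a subsequence is at least (q-1)^{-n} · (m choose n) · ((q-1)/q)^m. -/

import Mathlib

/-!
Let `f(m, y)` count the words `Z ∈ [q]^m` containing `y` as a subsequence. Matching `y`
greedily against the first letter of `Z` gives `f(m + 1, a :: y) = f(m, y) + (q - 1) f(m, a :: y)`:
a first letter equal to `a` may as well be matched, any other one is useless. This is Pascal's
rule with an extra factor `q - 1`, so induction gives `f(m, y) ≥ (m choose n) (q - 1)^(m - n)`,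
which is the largest term of the exact formula for `f`.
-/

open Finset

theorem List.cons_sublist_cons_iff_of_ne {α : Type*} {a b : α} {y l : List α} (h : b ≠ a) :
    (a :: y).Sublist (b :: l) ↔ (a :: y).Sublist l := by
  simp [List.sublist_cons_iff, h.symm]

section

variable {α : Type*} [Fintype α]

theorem card_filter_fin_succ_pi {m : ℕ} (P : (Fin (m + 1) → α) → Prop) [DecidablePred P] :
    #{Z | P Z} = ∑ b, #{Z : Fin m → α | P (Fin.cons b Z)} := by
  simp only [card_filter]
  rw [← Fintype.sum_prod_type']
  exact (Fintype.sum_equiv (Fin.consEquiv fun _ => α) _ _ fun _ => rfl).symm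

variable [DecidableEq α]

def subseqCount (α : Type*) [Fintype α] [DecidableEq α] (m : ℕ) (y : List α) : ℕ :=
  #{Z : Fin m → α | y.Sublist (List.ofFn Z)}

theorem subseqCount_nil (m : ℕ) : subseqCount α m [] = Fintype.card α ^ m := by
  simp [subseqCount]

theorem subseqCount_zero_cons (a : α) (y : List α) : subseqCount α 0 (a :: y) = 0 := by
  simp [subseqCount]

theorem subseqCount_succ_cons (m : ℕ) (a : α) (y : List α) :
    subseqCount α (m + 1) (a :: y) =
      subseqCount α m y + (Fintype.card α - 1) * subseqCount α m (a :: y) := by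
  have h_ne : ∀ b ∈ ({a}ᶜ : Finset α),
      #{Z : Fin m → α | (a :: y).Sublist (List.ofFn (Fin.cons b Z))} =
        subseqCount α m (a :: y) := by
    intro b hb
    simp only [List.ofFn_succ, Fin.cons_zero, Fin.cons_succ]
    simp_rw [List.cons_sublist_cons_iff_of_ne (by simpa using hb)]
    rfl
  rw [subseqCount, card_filter_fin_succ_pi, Fintype.sum_eq_add_sum_compl a, sum_congr rfl h_ne]
  simp [subseqCount, List.ofFn_succ, card_compl]

theorem choose_mul_pow_le_subseqCount (m : ℕ) (y : List α) :
    m.choose y.length * (Fintype.card α - 1) ^ (m - y.length) ≤ subseqCount α m y := by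
  induction m generalizing y with
  | zero => cases y <;> simp [subseqCount_nil, subseqCount_zero_cons]
  | succ m ih =>
    cases y with
    | nil => simpa [subseqCount_nil] using Nat.pow_le_pow_left (Nat.sub_le _ 1) _
    | cons a y =>
      set n := y.length
      have h_cons : m.choose (n + 1) * (Fintype.card α - 1) ^ (m - n)
          ≤ (Fintype.card α - 1) * subseqCount α m (a :: y) := by
        rcases le_or_gt m n with hmn | hnm
        · simp [Nat.choose_eq_zero_of_lt (Nat.lt_succ_of_le hmn)]
        · rw [show m - n = m - (n + 1) + 1 by omega, pow_succ', mul_left_comm]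
          exact Nat.mul_le_mul_left _ (ih (a :: y))
      calc (m + 1).choose (n + 1) * (Fintype.card α - 1) ^ (m + 1 - (n + 1))
          = m.choose n * (Fintype.card α - 1) ^ (m - n)
            + m.choose (n + 1) * (Fintype.card α - 1) ^ (m - n) := by
            rw [Nat.choose_succ_succ', Nat.add_sub_add_right, add_mul]
        _ ≤ subseqCount α m y + (Fintype.card α - 1) * subseqCount α m (a :: y) :=
            add_le_add (ih y) h_cons
        _ = subseqCount α (m + 1) (a :: y) := (subseqCount_succ_cons m a y).symm

end

theorem subsequence_probability_lower_general (q n m : ℕ) (hq : 2 ≤ q)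
    (y : List (Fin q)) (hy : y.length = n) :
    (((q : ℝ) - 1) ^ n)⁻¹ * (m.choose n : ℝ) * (((q : ℝ) - 1) / q) ^ m
      ≤ ((Finset.univ.filter
          (fun Z : Fin m → Fin q => y.Sublist (List.ofFn Z))).card : ℝ) / (q : ℝ) ^ m := by
  have h_count : (m.choose n : ℝ) * ((q : ℝ) - 1) ^ (m - n) ≤ subseqCount (Fin q) m y := by
    have h := choose_mul_pow_le_subseqCount m y
    rw [hy, Fintype.card_fin] at h
    rw [← Nat.cast_pred (by omega)]
    exact_mod_cast h
  rcases le_or_gt n m with hnm | hmn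
  · have hq₁ : (q : ℝ) - 1 ≠ 0 := by
      have : (2 : ℝ) ≤ q := by exact_mod_cast hq
      linarith
    calc (((q : ℝ) - 1) ^ n)⁻¹ * (m.choose n : ℝ) * (((q : ℝ) - 1) / q) ^ m
        = (m.choose n : ℝ) * ((q : ℝ) - 1) ^ (m - n) / (q : ℝ) ^ m := by
          rw [div_pow, pow_sub₀ _ hq₁ hnm]; ring
      _ ≤ _ := by gcongr; exact h_count
  · simp [Nat.choose_eq_zero_of_lt hmn]
    positivity

/-- For a fixed `y ∈ [q]^n` and a uniformly random `Z ∈ [q]^m` with `m = n(1+γ)`, the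
probability that `y` is a subsequence of `Z` is at least
`(q-1)^{-n} · (m choose n)((q-1)/q)^m`. -/
theorem subsequence_probability_lower (q n m : ℕ) (γ : ℝ) (hq : 2 ≤ q) (hn : 1 ≤ n)
    (hγ : 0 ≤ γ) (hm : (m : ℝ) = (n : ℝ) * (1 + γ))
    (y : List (Fin q)) (hy : y.length = n) :
    (((q : ℝ) - 1) ^ n)⁻¹ * (m.choose n : ℝ) * (((q : ℝ) - 1) / q) ^ m
      ≤ ((Finset.univ.filter
          (fun Z : Fin m → Fin q => y.Sublist (List.ofFn Z))).card : ℝ) / (q : ℝ) ^ m :=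
  subsequence_probability_lower_general q n m hq y hy
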